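/- arXiv:1709.01371 — 3 statements merged into one kernel-verified Lean document; each statement's English description precedes it below -/
import Mathlib

section
/- Let L ≥ 2 and k ≥ 1 be integers and 0 < p < 1, 0 ≤ q < 1 real numbers. Let Y, Z_1, …, Z_{L-1}, U, V be independent ℕ-valued random variables on a common probability space, where Y is geometric with parameter p, the Z_j are geometric with parameter q, U is negative binomial NB(k-1, p), and V is negative binomial NB(k-1, q). Set Z := max_{1 ≤ j ≤ L-1} Z_j and define W := Y + U on the event {Z ≤ Y} and W := Z + V on the event {Z > Y}. Then for every m ∈ ℕ, P(W = m) = p^{m-k+1}(1-p)^{k+1} · Σ_{(m₁,m₂) ∈ ℕ², m₁+m₂=m} (1 - q^{m₁+1})^{L-1} · C(m₂, k-1) + Σ_{(m₁,m₂) ∈ ℕ², m₁+m₂=m} [(1 - q^{m₁+1})^{L-1} - (1 - q^{m₁})^{L-1}] · (1 - p^{m₁}) · C(m₂, k-1) · q^{m₂-k+1}(1-q)^k. -/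
/-!
Split `{W = m}` by the branch taken: with `S = max_j Z_j` and `m₁ + m₂ = m`, it is the disjoint
union of the events `{S ≤ Y, Y = m₁, U = m₂}` and `{Y < S, S = m₁, V = m₂}`. Both are cut out by
conditions on `Y`, `U`, `V` and on every `Z_j` separately, `{S = m₁}` being `{S ≤ m₁} \ {S < m₁}`
there, so independence turns their probabilities into products of marginals. The geometric tails
`P(Z_j ≤ a) = 1 - q^(a+1)`, `P(Y < a) = 1 - p^a` and the negative binomial weights then give the
two sums.
-/

open MeasureTheory ProbabilityTheory Finset

section

variable {Ω : Type*} [MeasurableSpace Ω] {μ : Measure Ω}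

lemma toReal_measure_lt_of_geometric [IsFiniteMeasure μ] {f : Ω → ℕ} (hf : Measurable f) {r : ℝ}
    (h : ∀ m : ℕ, (μ {ω | f ω = m}).toReal = r ^ m * (1 - r)) (n : ℕ) :
    (μ {ω | f ω < n}).toReal = 1 - r ^ n := by
  rw [show {ω | f ω < n} = f ⁻¹' ↑(range n) by rw [coe_range]; rfl,
    ← sum_measure_preimage_singleton _ fun m _ => hf (measurableSet_singleton m),
    ENNReal.toReal_sum fun m _ => measure_ne_top μ _, ← mul_neg_geom_sum, mul_sum]
  exact sum_congr rfl fun m _ => by rw [mul_comm]; exact h m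

lemma toReal_measure_le_of_geometric [IsFiniteMeasure μ] {f : Ω → ℕ} (hf : Measurable f) {r : ℝ}
    (h : ∀ m : ℕ, (μ {ω | f ω = m}).toReal = r ^ m * (1 - r)) (n : ℕ) :
    (μ {ω | f ω ≤ n}).toReal = 1 - r ^ (n + 1) := by
  simpa only [Nat.lt_succ_iff] using toReal_measure_lt_of_geometric hf h (n + 1)

lemma toReal_measure_eq_of_negBinomial {f : Ω → ℕ} {j : ℕ} {a b : ℝ}
    (h : ∀ m : ℕ, j ≤ m → (μ {ω | f ω = m}).toReal = m.choose j * a ^ (m - j) * b)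
    (h0 : ∀ m : ℕ, m < j → μ {ω | f ω = m} = 0) (m : ℕ) :
    (μ {ω | f ω = m}).toReal = m.choose j * a ^ (m - j) * b := by
  rcases lt_or_ge m j with hm | hm
  · simp [h0 m hm, Nat.choose_eq_zero_of_lt hm]
  · exact h m hm

lemma measure_eq_sum_antidiagonal_of_ite {Y U V S W : Ω → ℕ} (hY : Measurable Y)
    (hU : Measurable U) (hV : Measurable V) (hS : Measurable S)
    (hW : ∀ ω, W ω = if S ω ≤ Y ω then Y ω + U ω else S ω + V ω) (m : ℕ) :
    μ {ω | W ω = m} = ∑ x ∈ antidiagonal m,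
      (μ {ω | S ω ≤ Y ω ∧ Y ω = x.1 ∧ U ω = x.2} + μ {ω | Y ω < S ω ∧ S ω = x.1 ∧ V ω = x.2}) := by
  classical
  set g : Ω → ℕ × ℕ := fun ω => if S ω ≤ Y ω then (Y ω, U ω) else (S ω, V ω)
  have hg : Measurable g := (hY.prodMk hU).ite (measurableSet_le hS hY) (hS.prodMk hV)
  have hWg : {ω | W ω = m} = g ⁻¹' ↑(antidiagonal m) := by
    ext ω
    by_cases h : S ω ≤ Y ω <;> simp [g, hW, h]
  have hfiber : ∀ x : ℕ × ℕ, g ⁻¹' {x} =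
      {ω | S ω ≤ Y ω ∧ Y ω = x.1 ∧ U ω = x.2} ∪ {ω | Y ω < S ω ∧ S ω = x.1 ∧ V ω = x.2} := by
    intro x
    ext ω
    by_cases h : S ω ≤ Y ω <;> simp [g, h, Prod.ext_iff, not_le.mp]
  rw [hWg, ← sum_measure_preimage_singleton _ fun x _ => hg (measurableSet_singleton x)]
  refine sum_congr rfl fun x _ => ?_
  rw [hfiber, measure_union]
  · exact Set.disjoint_left.mpr fun ω h h' => (not_le.mpr h'.1) h.1
  · exact (measurableSet_lt hY hS).inter
      ((hS (measurableSet_singleton _)).inter (hV (measurableSet_singleton _)))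

section Independence

variable {n : ℕ} {Y U V : Ω → ℕ} {Z : Fin n → Ω → ℕ}

lemma measure_inter_preimage_iInter_eq_mul_prod
    (hindep : iIndepFun (Sum.elim ![Y, U, V] Z : Fin 3 ⊕ Fin n → Ω → ℕ) μ) (sY sU sV t : Set ℕ) :
    μ (Y ⁻¹' sY ∩ U ⁻¹' sU ∩ V ⁻¹' sV ∩ ⋂ j, Z j ⁻¹' t) =
      μ (Y ⁻¹' sY) * μ (U ⁻¹' sU) * μ (V ⁻¹' sV) * ∏ j, μ (Z j ⁻¹' t) := by
  have h := hindep.measure_inter_preimage_eq_mul univ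
    (sets := Sum.elim ![sY, sU, sV] fun _ => t) fun _ _ => MeasurableSet.of_discrete
  simp only [Fintype.prod_sum_type, Fin.prod_univ_three, Sum.elim_inl, Sum.elim_inr,
    Matrix.cons_val] at h
  rw [← h]
  congr 1
  ext ω
  simp [Fin.forall_fin_succ, and_assoc]

lemma toReal_measure_sup_le_and_eq_and_eq [IsProbabilityMeasure μ]
    (hindep : iIndepFun (Sum.elim ![Y, U, V] Z : Fin 3 ⊕ Fin n → Ω → ℕ) μ) (a b : ℕ) :
    (μ {ω | (univ.sup fun j => Z j ω) ≤ Y ω ∧ Y ω = a ∧ U ω = b}).toReal =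
      (μ {ω | Y ω = a}).toReal * (μ {ω | U ω = b}).toReal * ∏ j, (μ {ω | Z j ω ≤ a}).toReal := by
  have hset : {ω | (univ.sup fun j => Z j ω) ≤ Y ω ∧ Y ω = a ∧ U ω = b} =
      Y ⁻¹' {a} ∩ U ⁻¹' {b} ∩ V ⁻¹' Set.univ ∩ ⋂ j, Z j ⁻¹' Set.Iic a := by
    ext ω
    simp only [Set.mem_ofPred_eq, Finset.sup_le_iff, mem_univ, true_implies, Set.mem_inter_iff,
      Set.mem_preimage, Set.mem_singleton_iff, Set.mem_univ, and_true, Set.mem_iInter, Set.mem_Iic]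
    grind
  rw [hset, measure_inter_preimage_iInter_eq_mul_prod hindep, Set.preimage_univ, measure_univ,
    mul_one, ENNReal.toReal_mul, ENNReal.toReal_mul, ENNReal.toReal_prod]
  rfl

lemma toReal_measure_lt_sup_and_sup_eq_and_eq [IsProbabilityMeasure μ]
    (hindep : iIndepFun (Sum.elim ![Y, U, V] Z : Fin 3 ⊕ Fin n → Ω → ℕ) μ)
    (hY : Measurable Y) (hV : Measurable V) (hZ : ∀ j, Measurable (Z j)) (a b : ℕ) :
    (μ {ω | Y ω < (univ.sup fun j => Z j ω) ∧ (univ.sup fun j => Z j ω) = a ∧ V ω = b}).toReal =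
      (μ {ω | Y ω < a}).toReal * (μ {ω | V ω = b}).toReal *
        (∏ j, (μ {ω | Z j ω ≤ a}).toReal - ∏ j, (μ {ω | Z j ω < a}).toReal) := by
  set E : Set ℕ → Set Ω := fun t => Y ⁻¹' Set.Iio a ∩ U ⁻¹' Set.univ ∩ V ⁻¹' {b} ∩ ⋂ j, Z j ⁻¹' t
  have hE (t : Set ℕ) : (μ (E t)).toReal =
      (μ {ω | Y ω < a}).toReal * (μ {ω | V ω = b}).toReal * ∏ j, (μ (Z j ⁻¹' t)).toReal := by
    rw [measure_inter_preimage_iInter_eq_mul_prod hindep, Set.preimage_univ, measure_univ,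
      mul_one, ENNReal.toReal_mul, ENNReal.toReal_mul, ENNReal.toReal_prod]
    rfl
  -- `Y ω < a` forces `0 < a`, so the maximum is `< a` iff every `Z j ω` is, even for `n = 0`
  have hset : {ω | Y ω < (univ.sup fun j => Z j ω) ∧ (univ.sup fun j => Z j ω) = a ∧ V ω = b} =
      E (Set.Iic a) \ E (Set.Iio a) := by
    ext ω
    simp only [E, Set.mem_ofPred_eq, Set.mem_sdiff, Set.mem_inter_iff, Set.mem_preimage,
      Set.mem_Iio, Set.mem_univ, and_true, Set.mem_singleton_iff, Set.mem_iInter, Set.mem_Iic]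
    have hle_sup (j : Fin n) : Z j ω ≤ univ.sup fun j => Z j ω :=
      Finset.le_sup (f := fun j => Z j ω) (mem_univ j)
    constructor
    · rintro ⟨hYS, hSa, hVb⟩
      refine ⟨⟨⟨hSa ▸ hYS, hVb⟩, fun j => hSa ▸ hle_sup j⟩, fun ⟨_, hlt⟩ => ?_⟩
      exact hSa.not_lt ((Finset.sup_lt_iff (by rw [Nat.bot_eq_zero]; omega)).2 fun j _ => hlt j)
    · rintro ⟨⟨⟨hYa, hVb⟩, hle⟩, hnot⟩
      have hSa : (univ.sup fun j => Z j ω) = a := le_antisymm (Finset.sup_le fun j _ => hle j)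
        (not_lt.1 fun hlt => hnot ⟨⟨hYa, hVb⟩, fun j => (hle_sup j).trans_lt hlt⟩)
      exact ⟨hSa ▸ hYa, hSa, hVb⟩
  have hsub : E (Set.Iio a) ⊆ E (Set.Iic a) := Set.inter_subset_inter_right _
    (Set.iInter_mono fun j => Set.preimage_mono Set.Iio_subset_Iic_self)
  have hmeas : MeasurableSet (E (Set.Iio a)) := by measurability
  rw [hset, measure_sdiff hsub hmeas.nullMeasurableSet (measure_ne_top _ _),
    ENNReal.toReal_sub_of_le (measure_mono hsub) (measure_ne_top _ _), hE, hE, mul_sub]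
  rfl

end Independence

end

theorem kmacs_heuristic_length_distribution_general
    {Ω : Type*} [MeasurableSpace Ω] (μ : Measure Ω) [IsProbabilityMeasure μ]
    (L k : ℕ) (hk : 1 ≤ k)
    (p q : ℝ)
    (Y U V : Ω → ℕ) (Z : Fin (L - 1) → Ω → ℕ)
    (hYmeas : Measurable Y) (hUmeas : Measurable U) (hVmeas : Measurable V)
    (hZmeas : ∀ j, Measurable (Z j))
    (hindep : iIndepFun
      (Sum.elim ![Y, U, V] Z : (Fin 3 ⊕ Fin (L - 1)) → Ω → ℕ) μ)
    (hY : ∀ m : ℕ, (μ {ω | Y ω = m}).toReal = p ^ m * (1 - p))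
    (hZ : ∀ j, ∀ m : ℕ, (μ {ω | Z j ω = m}).toReal = q ^ m * (1 - q))
    (hU : ∀ m : ℕ, k - 1 ≤ m →
      (μ {ω | U ω = m}).toReal = (m.choose (k - 1) : ℝ) * p ^ (m - (k - 1)) * (1 - p) ^ k)
    (hU0 : ∀ m : ℕ, m < k - 1 → μ {ω | U ω = m} = 0)
    (hV : ∀ m : ℕ, k - 1 ≤ m →
      (μ {ω | V ω = m}).toReal = (m.choose (k - 1) : ℝ) * q ^ (m - (k - 1)) * (1 - q) ^ k)
    (hV0 : ∀ m : ℕ, m < k - 1 → μ {ω | V ω = m} = 0)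
    (W : Ω → ℕ)
    (hW : ∀ ω, W ω =
      if (Finset.univ.sup fun j => Z j ω) ≤ Y ω then Y ω + U ω
      else (Finset.univ.sup fun j => Z j ω) + V ω)
    (m : ℕ) :
    (μ {ω | W ω = m}).toReal =
      p ^ (m + 1 - k) * (1 - p) ^ (k + 1) *
        (∑ x ∈ Finset.HasAntidiagonal.antidiagonal m,
          (1 - q ^ (x.1 + 1)) ^ (L - 1) * (x.2.choose (k - 1) : ℝ))
      + ∑ x ∈ Finset.HasAntidiagonal.antidiagonal m,
          ((1 - q ^ (x.1 + 1)) ^ (L - 1) - (1 - q ^ x.1) ^ (L - 1)) * (1 - p ^ x.1) *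
            (x.2.choose (k - 1) : ℝ) * q ^ (x.2 + 1 - k) * (1 - q) ^ k := by
  have hUpmf := toReal_measure_eq_of_negBinomial hU hU0
  have hVpmf := toReal_measure_eq_of_negBinomial hV hV0
  have hZle j := toReal_measure_le_of_geometric (hZmeas j) (hZ j)
  have hZlt j := toReal_measure_lt_of_geometric (hZmeas j) (hZ j)
  rw [measure_eq_sum_antidiagonal_of_ite hYmeas hUmeas hVmeas (by fun_prop) hW,
    ENNReal.toReal_sum fun _ _ => by finiteness]
  simp_rw [ENNReal.toReal_add (measure_ne_top μ _) (measure_ne_top μ _)]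
  rw [sum_add_distrib, mul_sum]
  congr 1 <;> refine sum_congr rfl fun x hx => ?_ <;> rw [HasAntidiagonal.mem_antidiagonal] at hx
  · rw [toReal_measure_sup_le_and_eq_and_eq hindep, hY, hUpmf]
    simp only [hZle, prod_const, card_univ, Fintype.card_fin]
    rcases lt_or_ge x.2 (k - 1) with hsmall | hlarge
    · simp [Nat.choose_eq_zero_of_lt hsmall]
    · rw [show m + 1 - k = x.1 + (x.2 - (k - 1)) by omega, pow_add]
      ring
  · rw [toReal_measure_lt_sup_and_sup_eq_and_eq hindep hYmeas hVmeas hZmeas,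
      toReal_measure_lt_of_geometric hYmeas hY, hVpmf]
    simp only [hZle, hZlt, prod_const, card_univ, Fintype.card_fin]
    rw [show x.2 + 1 - k = x.2 - (k - 1) by omega]
    ring

/-- Theorem 1 of the paper: the length distribution of the `k`-mismatch common
substrings returned by the kmacs heuristic. Here `Y` (geometric with parameter `p`)
models the longest exact homologous match, `Z_1, …, Z_{L-1}` (geometric with parameter
`q`) the longest exact background matches, `U` (negative binomial `NB(k-1, p)`) and `V`
(negative binomial `NB(k-1, q)`) the subsequent gap-free extensions; all are independent.
With `Z = max_j Z_j` and `W = Y + U` on `{Z ≤ Y}`, `W = Z + V` on `{Z > Y}`, we have for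
every `m`:
`P(W = m) = p^(m-k+1) (1-p)^(k+1) Σ_{m₁+m₂=m} (1-q^(m₁+1))^(L-1) C(m₂,k-1)`
`  + Σ_{m₁+m₂=m} ((1-q^(m₁+1))^(L-1) - (1-q^(m₁))^(L-1)) (1-p^(m₁)) C(m₂,k-1) q^(m₂-k+1) (1-q)^k`.
(The exponents `m - k + 1` and `m₂ - k + 1` are written as the truncated natural-number
subtractions `m + 1 - k` and `m₂ + 1 - k`; the terms where these would be negative vanish
because the binomial coefficient `C(m₂, k-1)` is zero there.) -/
theorem kmacs_heuristic_length_distribution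
    {Ω : Type*} [MeasurableSpace Ω] (μ : Measure Ω) [IsProbabilityMeasure μ]
    (L k : ℕ) (hL : 2 ≤ L) (hk : 1 ≤ k)
    (p q : ℝ) (hp0 : 0 < p) (hp1 : p < 1) (hq0 : 0 ≤ q) (hq1 : q < 1)
    (Y U V : Ω → ℕ) (Z : Fin (L - 1) → Ω → ℕ)
    (hYmeas : Measurable Y) (hUmeas : Measurable U) (hVmeas : Measurable V)
    (hZmeas : ∀ j, Measurable (Z j))
    (hindep : iIndepFun
      (Sum.elim ![Y, U, V] Z : (Fin 3 ⊕ Fin (L - 1)) → Ω → ℕ) μ)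
    (hY : ∀ m : ℕ, (μ {ω | Y ω = m}).toReal = p ^ m * (1 - p))
    (hZ : ∀ j, ∀ m : ℕ, (μ {ω | Z j ω = m}).toReal = q ^ m * (1 - q))
    (hU : ∀ m : ℕ, k - 1 ≤ m →
      (μ {ω | U ω = m}).toReal = (m.choose (k - 1) : ℝ) * p ^ (m - (k - 1)) * (1 - p) ^ k)
    (hU0 : ∀ m : ℕ, m < k - 1 → μ {ω | U ω = m} = 0)
    (hV : ∀ m : ℕ, k - 1 ≤ m →
      (μ {ω | V ω = m}).toReal = (m.choose (k - 1) : ℝ) * q ^ (m - (k - 1)) * (1 - q) ^ k)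
    (hV0 : ∀ m : ℕ, m < k - 1 → μ {ω | V ω = m} = 0)
    (W : Ω → ℕ)
    (hW : ∀ ω, W ω =
      if (Finset.univ.sup fun j => Z j ω) ≤ Y ω then Y ω + U ω
      else (Finset.univ.sup fun j => Z j ω) + V ω)
    (m : ℕ) :
    (μ {ω | W ω = m}).toReal =
      p ^ (m + 1 - k) * (1 - p) ^ (k + 1) *
        (∑ x ∈ Finset.HasAntidiagonal.antidiagonal m,
          (1 - q ^ (x.1 + 1)) ^ (L - 1) * (x.2.choose (k - 1) : ℝ))
      + ∑ x ∈ Finset.HasAntidiagonal.antidiagonal m,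
          ((1 - q ^ (x.1 + 1)) ^ (L - 1) - (1 - q ^ x.1) ^ (L - 1)) * (1 - p ^ x.1) *
            (x.2.choose (k - 1) : ℝ) * q ^ (x.2 + 1 - k) * (1 - q) ^ k :=
  kmacs_heuristic_length_distribution_general μ L k hk p q Y U V Z hYmeas hUmeas hVmeas hZmeas
    hindep hY hZ hU hU0 hV hV0 W hW m
end

section
/- Let k ≥ 1 be an integer and 0 < q < p < 1 real numbers. Let A be an event and let U, V be ℕ-valued random variables on the same probability space such that U is negative binomial NB(k, p), V is negative binomial NB(k, q), and each of U and V is independent of A. Define Ŵ := U on A and Ŵ := V on the complement of A. Then: (i) for every m ∈ ℕ, P(Ŵ = m) = P(A) · C(m, k) p^{m-k}(1-p)^{k+1} + P(Aᶜ) · C(m, k) q^{m-k}(1-q)^{k+1}; (ii) the 'homologous' contribution m ↦ C(m, k) p^{m-k}(1-p)^{k+1} attains its maximum over integers m ≥ k at m_H = ⌈k/(1-p) − 1⌉; and (iii) the 'background' contribution m ↦ C(m, k) q^{m-k}(1-q)^{k+1} attains its maximum over integers m ≥ k at m_B = ⌈k/(1-q) − 1⌉. -/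
open MeasureTheory ProbabilityTheory
open scoped Classical

private lemma nb_id (k m : ℕ) (hm : k ≤ m) :
    ((m+1).choose k : ℝ) * ((m+1-k : ℕ) : ℝ) = (m.choose k : ℝ) * ((m:ℝ)+1) := by
  have h := Nat.choose_mul_succ_eq m k
  exact_mod_cast congrArg (Nat.cast : ℕ → ℝ) h.symm

private lemma nb_step_inc (k m : ℕ) (hm : k ≤ m) (p : ℝ) (hp0 : 0 < p) (hp1 : p < 1)
    (h : ((m:ℝ)+1) * (1-p) ≤ k) :
    (m.choose k : ℝ) * p ^ (m-k) * (1-p)^(k+1) ≤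
      ((m+1).choose k : ℝ) * p ^ (m+1-k) * (1-p)^(k+1) := by
  have hrm : m + 1 - k = (m - k) + 1 := by omega
  rw [hrm, pow_succ]
  set c : ℝ := (m.choose k : ℝ) with hc
  set c' : ℝ := ((m+1).choose k : ℝ) with hc'
  have hid := nb_id k m hm
  have hr : ((m+1-k : ℕ) : ℝ) = (m:ℝ) + 1 - k := by
    push_cast [Nat.cast_sub (by omega : k ≤ m + 1)]; ring
  have hrpos : (0:ℝ) < ((m+1-k : ℕ) : ℝ) := by
    have : 0 < m + 1 - k := by omega
    exact_mod_cast this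
  have hcpos : (0:ℝ) < c := by
    rw [hc]; exact_mod_cast Nat.choose_pos hm
  have hkey : c ≤ c' * p := by
    rw [hr] at hid hrpos
    nlinarith [mul_pos hcpos hrpos]
  have h1p : (0:ℝ) < 1 - p := by linarith
  have hX : (0:ℝ) < p ^ (m-k) * (1-p)^(k+1) := by positivity
  calc c * p ^ (m-k) * (1-p)^(k+1) = c * (p ^ (m-k) * (1-p)^(k+1)) := by ring
    _ ≤ (c' * p) * (p ^ (m-k) * (1-p)^(k+1)) := by
        exact mul_le_mul_of_nonneg_right hkey (le_of_lt hX)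
    _ = c' * (p ^ (m-k) * p) * (1-p)^(k+1) := by ring

private lemma nb_step_dec (k m : ℕ) (hm : k ≤ m) (p : ℝ) (hp0 : 0 < p) (hp1 : p < 1)
    (h : (k:ℝ) ≤ ((m:ℝ)+1) * (1-p)) :
    ((m+1).choose k : ℝ) * p ^ (m+1-k) * (1-p)^(k+1) ≤
      (m.choose k : ℝ) * p ^ (m-k) * (1-p)^(k+1) := by
  have hrm : m + 1 - k = (m - k) + 1 := by omega
  rw [hrm, pow_succ]
  set c : ℝ := (m.choose k : ℝ) with hc
  set c' : ℝ := ((m+1).choose k : ℝ) with hc'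
  have hid := nb_id k m hm
  have hr : ((m+1-k : ℕ) : ℝ) = (m:ℝ) + 1 - k := by
    push_cast [Nat.cast_sub (by omega : k ≤ m + 1)]; ring
  have hrpos : (0:ℝ) < ((m+1-k : ℕ) : ℝ) := by
    have : 0 < m + 1 - k := by omega
    exact_mod_cast this
  have hcpos : (0:ℝ) < c := by
    rw [hc]; exact_mod_cast Nat.choose_pos hm
  have hkey : c' * p ≤ c := by
    rw [hr] at hid hrpos
    nlinarith [mul_pos hcpos hrpos]
  have h1p : (0:ℝ) < 1 - p := by linarith
  have hX : (0:ℝ) < p ^ (m-k) * (1-p)^(k+1) := by positivity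
  calc c' * (p ^ (m-k) * p) * (1-p)^(k+1) = (c' * p) * (p ^ (m-k) * (1-p)^(k+1)) := by ring
    _ ≤ c * (p ^ (m-k) * (1-p)^(k+1)) := mul_le_mul_of_nonneg_right hkey (le_of_lt hX)
    _ = c * p ^ (m-k) * (1-p)^(k+1) := by ring

private lemma nb_peak (k : ℕ) (hk : 1 ≤ k) (p : ℝ) (hp0 : 0 < p) (hp1 : p < 1) :
    k ≤ ⌈(k : ℝ) / (1 - p) - 1⌉₊ ∧
      ∀ m : ℕ, k ≤ m →
        (m.choose k : ℝ) * p ^ (m - k) * (1 - p) ^ (k + 1) ≤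
          ((⌈(k : ℝ) / (1 - p) - 1⌉₊).choose k : ℝ) *
            p ^ (⌈(k : ℝ) / (1 - p) - 1⌉₊ - k) * (1 - p) ^ (k + 1) := by
  have h1p : (0:ℝ) < 1 - p := by linarith
  set x : ℝ := (k : ℝ) / (1 - p) - 1 with hx
  set M : ℕ := ⌈x⌉₊ with hM
  have hk1 : (1:ℝ) ≤ (k:ℝ) := by exact_mod_cast hk
  have hkM : k ≤ M := by
    have h1 : ((k - 1 : ℕ) : ℝ) < x := by
      have : ((k - 1 : ℕ) : ℝ) = (k:ℝ) - 1 := by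
        push_cast [Nat.cast_sub hk]; ring
      rw [this, hx, lt_sub_iff_add_lt, sub_add_cancel, lt_div_iff₀ h1p]
      nlinarith
    have := Nat.lt_ceil.mpr h1
    omega
  -- increasing part
  have inc : ∀ b : ℕ, b ≤ M → ∀ a : ℕ, k ≤ a → a ≤ b →
      (a.choose k : ℝ) * p ^ (a - k) * (1 - p) ^ (k + 1) ≤
        (b.choose k : ℝ) * p ^ (b - k) * (1 - p) ^ (k + 1) := by
    intro b
    induction b with
    | zero => intro _ a ha hab; omega
    | succ n ih =>
      intro hbM a ha hab
      rcases Nat.lt_or_ge a (n+1) with hlt | hge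
      · have han : a ≤ n := by omega
        have hkn : k ≤ n := le_trans ha han
        have hnM : (n : ℝ) < x := Nat.lt_ceil.mp (by omega)
        have hcond : ((n:ℝ)+1) * (1-p) ≤ k := by
          rw [hx, lt_sub_iff_add_lt, lt_div_iff₀ h1p] at hnM
          nlinarith
        exact le_trans (ih (by omega) a ha han) (nb_step_inc k n hkn p hp0 hp1 hcond)
      · have : a = n + 1 := by omega
        subst this; exact le_refl _
  -- decreasing part
  have dec : ∀ b : ℕ, M ≤ b →
      (b.choose k : ℝ) * p ^ (b - k) * (1 - p) ^ (k + 1) ≤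
        (M.choose k : ℝ) * p ^ (M - k) * (1 - p) ^ (k + 1) := by
    intro b
    induction b with
    | zero => intro h; omega
    | succ n ih =>
      intro hMb
      rcases Nat.lt_or_ge M (n+1) with hlt | hge
      · have hMn : M ≤ n := by omega
        have hkn : k ≤ n := le_trans hkM hMn
        have hxn : x ≤ (n:ℝ) := Nat.ceil_le.mp hMn
        have hcond : (k:ℝ) ≤ ((n:ℝ)+1) * (1-p) := by
          rw [hx, sub_le_iff_le_add, div_le_iff₀ h1p] at hxn
          nlinarith
        exact le_trans (nb_step_dec k n hkn p hp0 hp1 hcond) (ih hMn)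
      · have : M = n + 1 := by omega
        rw [this]
  refine ⟨hkM, fun m hm => ?_⟩
  rcases Nat.le_total m M with h | h
  · exact inc M (le_refl M) m hm h
  · exact dec m h


/-- Theorem 2 of the paper: if `Ŵ = U` on an event `A` and `Ŵ = V` on its complement,
where `U` is negative binomial `NB(k,p)`, `V` is negative binomial `NB(k,q)`
(`0 < q < p < 1`), and each of `U` and `V` is independent of `A`, then
(i) `P(Ŵ = m) = P(A) C(m,k) p^(m-k) (1-p)^(k+1) + P(Aᶜ) C(m,k) q^(m-k) (1-q)^(k+1)`
for every `m`;
(ii) the homologous contribution `m ↦ C(m,k) p^(m-k) (1-p)^(k+1)` attains its maximum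
over integers `m ≥ k` at `m_H = ⌈k/(1-p) − 1⌉`; and
(iii) the background contribution `m ↦ C(m,k) q^(m-k) (1-q)^(k+1)` attains its maximum
over integers `m ≥ k` at `m_B = ⌈k/(1-q) − 1⌉`.
(Since `k/(1-p) - 1 ≥ 0` and `k/(1-q) - 1 ≥ 0`, the natural-number ceiling `⌈·⌉₊`
agrees with the real ceiling.) -/
theorem kmacs_extension_mixture_and_peaks
    {Ω : Type*} [MeasurableSpace Ω] (μ : Measure Ω) [IsProbabilityMeasure μ]
    (k : ℕ) (hk : 1 ≤ k) (p q : ℝ) (hq0 : 0 < q) (hqp : q < p) (hp1 : p < 1)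
    (A : Set Ω) (hA : MeasurableSet A)
    (U V : Ω → ℕ) (hUmeas : Measurable U) (hVmeas : Measurable V)
    (hU : ∀ m : ℕ, k ≤ m →
      (μ {ω | U ω = m}).toReal = (m.choose k : ℝ) * p ^ (m - k) * (1 - p) ^ (k + 1))
    (hU0 : ∀ m : ℕ, m < k → μ {ω | U ω = m} = 0)
    (hV : ∀ m : ℕ, k ≤ m →
      (μ {ω | V ω = m}).toReal = (m.choose k : ℝ) * q ^ (m - k) * (1 - q) ^ (k + 1))
    (hV0 : ∀ m : ℕ, m < k → μ {ω | V ω = m} = 0)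
    (hUA : ∀ s : Set ℕ, μ (A ∩ U ⁻¹' s) = μ A * μ (U ⁻¹' s))
    (hVA : ∀ s : Set ℕ, μ (A ∩ V ⁻¹' s) = μ A * μ (V ⁻¹' s))
    (W : Ω → ℕ) (hW : ∀ ω, W ω = if ω ∈ A then U ω else V ω) :
    (∀ m : ℕ, (μ {ω | W ω = m}).toReal =
        (μ A).toReal * ((m.choose k : ℝ) * p ^ (m - k) * (1 - p) ^ (k + 1)) +
        (μ Aᶜ).toReal * ((m.choose k : ℝ) * q ^ (m - k) * (1 - q) ^ (k + 1))) ∧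
    (k ≤ ⌈(k : ℝ) / (1 - p) - 1⌉₊ ∧
      ∀ m : ℕ, k ≤ m →
        (m.choose k : ℝ) * p ^ (m - k) * (1 - p) ^ (k + 1) ≤
          ((⌈(k : ℝ) / (1 - p) - 1⌉₊).choose k : ℝ) *
            p ^ (⌈(k : ℝ) / (1 - p) - 1⌉₊ - k) * (1 - p) ^ (k + 1)) ∧
    (k ≤ ⌈(k : ℝ) / (1 - q) - 1⌉₊ ∧
      ∀ m : ℕ, k ≤ m →
        (m.choose k : ℝ) * q ^ (m - k) * (1 - q) ^ (k + 1) ≤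
          ((⌈(k : ℝ) / (1 - q) - 1⌉₊).choose k : ℝ) *
            q ^ (⌈(k : ℝ) / (1 - q) - 1⌉₊ - k) * (1 - q) ^ (k + 1)) := by
  have hq1 : q < 1 := lt_trans hqp hp1
  have hp0 : 0 < p := lt_trans hq0 hqp
  refine ⟨?_, nb_peak k hk p hp0 hp1, nb_peak k hk q hq0 hq1⟩
  intro m
  -- preimage = setOf
  have hUpre : U ⁻¹' {m} = {ω | U ω = m} := rfl
  have hVpre : V ⁻¹' {m} = {ω | V ω = m} := rfl
  -- split the event along A
  have hsplit : μ {ω | W ω = m} =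
      μ (A ∩ U ⁻¹' {m}) + μ (Aᶜ ∩ V ⁻¹' {m}) := by
    have e1 : {ω | W ω = m} ∩ A = A ∩ U ⁻¹' {m} := by
      ext ω; by_cases hω : ω ∈ A <;> simp [hW ω, hω, and_comm]
    have e2 : {ω | W ω = m} \ A = Aᶜ ∩ V ⁻¹' {m} := by
      ext ω; by_cases hω : ω ∈ A <;> simp [hW ω, hω, and_comm, Set.mem_diff]
    rw [← measure_inter_add_diff {ω | W ω = m} hA, e1, e2]
  -- independence for the complement
  have hAcV : μ (Aᶜ ∩ V ⁻¹' {m}) = μ Aᶜ * μ (V ⁻¹' {m}) := by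
    have h1 : μ (A ∩ V ⁻¹' {m}) + μ (Aᶜ ∩ V ⁻¹' {m}) = μ (V ⁻¹' {m}) := by
      have h := measure_inter_add_diff (μ := μ) (V ⁻¹' {m}) hA
      rwa [Set.inter_comm, Set.diff_eq, Set.inter_comm _ Aᶜ] at h
    have h2 : μ (A ∩ V ⁻¹' {m}) + μ Aᶜ * μ (V ⁻¹' {m}) = μ (V ⁻¹' {m}) := by
      rw [hVA, ← add_mul, measure_add_measure_compl hA, measure_univ, one_mul]
    have hne : μ (A ∩ V ⁻¹' {m}) ≠ ⊤ := measure_ne_top μ _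
    exact (ENNReal.add_right_inj hne).mp (h1.trans h2.symm)
  rw [hsplit, hUA, hAcV]
  rw [ENNReal.toReal_add (by finiteness) (by finiteness), ENNReal.toReal_mul, ENNReal.toReal_mul]
  rcases Nat.lt_or_ge m k with hm | hm
  · rw [hUpre, hVpre]
    have hc : m.choose k = 0 := Nat.choose_eq_zero_of_lt hm
    rw [hU0 m hm, hV0 m hm]
    simp [hc]
  · rw [hUpre, hVpre, hU m hm, hV m hm]
end

section
/- Let k ≥ 1 be an integer and 0 < p < 1 a real number, and set m* := ⌈k/(1-p) − 1⌉. Then the estimator p̂ := (m* + 1 − k)/(m* + 1) satisfies p ≤ p̂ < p + (1-p)²/(k + 1 − p). In particular, the error of the estimate p̂ of the match probability p tends to 0 as k → ∞. -/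
open Filter

/-- Accuracy of the paper's estimator of the match probability `p`: with
`m* = ⌈k/(1-p) − 1⌉` the position of the homologous peak, the estimator
`p̂ = (m* + 1 − k)/(m* + 1)` satisfies `p ≤ p̂ < p + (1-p)²/(k + 1 − p)` for every
integer `k ≥ 1`; in particular the error `p̂ − p` tends to `0` as `k → ∞`.
(Since `k/(1-p) - 1 ≥ 0` for `k ≥ 1`, the natural-number ceiling `⌈·⌉₊` agrees with
the real ceiling.) -/
theorem match_probability_estimator_accuracy (p : ℝ) (hp0 : 0 < p) (hp1 : p < 1)
    (phat : ℕ → ℝ)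
    (hphat : ∀ k : ℕ, phat k =
      ((⌈(k : ℝ) / (1 - p) - 1⌉₊ : ℝ) + 1 - (k : ℝ)) / ((⌈(k : ℝ) / (1 - p) - 1⌉₊ : ℝ) + 1)) :
    (∀ k : ℕ, 1 ≤ k →
      p ≤ phat k ∧ phat k < p + (1 - p) ^ 2 / ((k : ℝ) + 1 - p)) ∧
    Tendsto (fun k : ℕ => phat k - p) atTop (nhds 0) := by
  have h1p : (0:ℝ) < 1 - p := by linarith
  have key : ∀ k : ℕ, 1 ≤ k →
      p ≤ phat k ∧ phat k < p + (1 - p) ^ 2 / ((k : ℝ) + 1 - p) := by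
    intro k hk
    have hk1 : (1:ℝ) ≤ (k:ℝ) := by exact_mod_cast hk
    set c : ℕ := ⌈(k : ℝ) / (1 - p) - 1⌉₊ with hc
    set m : ℝ := (c:ℝ) + 1 with hmdef
    have hx0 : (0:ℝ) ≤ (k:ℝ) / (1 - p) - 1 := by
      have : (1:ℝ) ≤ (k:ℝ) / (1 - p) := by
        rw [le_div_iff₀ h1p]; nlinarith
      linarith
    have hc1 : (k : ℝ) / (1 - p) - 1 ≤ (c:ℝ) := Nat.le_ceil _
    have hc2 : (c:ℝ) < ((k : ℝ) / (1 - p) - 1) + 1 := Nat.ceil_lt_add_one hx0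
    have hkm : (k:ℝ) ≤ m * (1 - p) := by
      have h1 : (k : ℝ) / (1 - p) ≤ m := by simp only [hmdef]; linarith
      rw [div_le_iff₀ h1p] at h1; linarith
    have hm0 : (0:ℝ) < m := by nlinarith
    have hA : (0:ℝ) < (k:ℝ) + 1 - p := by linarith
    have hm2 : m * (1 - p) < (k:ℝ) + 1 - p := by
      have h1 : m < (k : ℝ) / (1 - p) + 1 := by simp only [hmdef]; linarith
      have h2 : m - 1 < (k : ℝ) / (1 - p) := by linarith
      rw [lt_div_iff₀ h1p] at h2; nlinarith
    rw [hphat k, ← hc, ← hmdef]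
    constructor
    · rw [le_div_iff₀ hm0]; nlinarith
    · have hrhs : p + (1 - p) ^ 2 / ((k:ℝ) + 1 - p)
          = (p * ((k:ℝ) + 1 - p) + (1 - p) ^ 2) / ((k:ℝ) + 1 - p) := by
        field_simp
      rw [hrhs, div_lt_div_iff₀ hm0 hA]
      nlinarith [mul_lt_mul_of_pos_left hm2 (lt_of_lt_of_le one_pos hk1)]
  refine ⟨key, ?_⟩
  have hb : Tendsto (fun k : ℕ => (1 - p) ^ 2 / ((k : ℝ) + 1 - p)) atTop (nhds 0) := by
    apply Tendsto.div_atTop (tendsto_const_nhds)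
    have : Tendsto (fun k : ℕ => (k : ℝ) + (1 - p)) atTop atTop :=
      tendsto_atTop_add_const_right atTop (1 - p) tendsto_natCast_atTop_atTop
    convert this using 2 with k
    ring
  refine tendsto_of_tendsto_of_tendsto_of_le_of_le' (tendsto_const_nhds : Tendsto (fun _ : ℕ => (0:ℝ)) atTop (nhds 0))
    hb ?_ ?_
  · filter_upwards [eventually_ge_atTop 1] with k hk
    linarith [(key k hk).1]
  · filter_upwards [eventually_ge_atTop 1] with k hk
    linarith [(key k hk).2]
end
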